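/- For the recursively defined sequence (f_n) with n ≥ 1, the complementary symmetry f_n(t) = f_n(t_{n-1}) - f_n(t_{n-1} - t) holds for all 0 ≤ t ≤ t_{n-1}. -/
import Mathlib

open MeasureTheory Set

/-- Antisymmetrized extension: `f̃_{n+1}` built from `f_n = g` with times `tn = t_n`, `tn1 = t_{n+1}`. -/
noncomputable def ftilde (g : ℝ → ℝ) (tn tn1 : ℝ) (t : ℝ) : ℝ :=
  if 0 ≤ t ∧ t ≤ tn then g t
  else if tn1 - tn ≤ t ∧ t ≤ tn1 then -g (tn1 - t)
  else 0

/-- The recursively defined sequence `f_n` (with `f_0 ≡ c`). -/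
noncomputable def fseq (ts : ℕ → ℝ) (c : ℝ) : ℕ → ℝ → ℝ
  | 0 => fun _ => c
  | n + 1 => fun t => ∫ s in (0:ℝ)..t, ftilde (fseq ts c n) (ts n) (ts (n + 1)) s

lemma ftilde_measurable {g : ℝ → ℝ} (hg : Measurable g) (tn tn1 : ℝ) :
    Measurable (ftilde g tn tn1) := by
  unfold ftilde
  have h1 : MeasurableSet {t : ℝ | 0 ≤ t ∧ t ≤ tn} := by
    have : {t : ℝ | 0 ≤ t ∧ t ≤ tn} = Icc 0 tn := rfl
    rw [this]; exact measurableSet_Icc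
  have h2 : MeasurableSet {t : ℝ | tn1 - tn ≤ t ∧ t ≤ tn1} := by
    have : {t : ℝ | tn1 - tn ≤ t ∧ t ≤ tn1} = Icc (tn1 - tn) tn1 := rfl
    rw [this]; exact measurableSet_Icc
  exact Measurable.ite h1 hg <| Measurable.ite h2 (hg.comp (measurable_const.sub measurable_id)).neg measurable_const

lemma ftilde_bound {g : ℝ → ℝ} (hg : Continuous g) (tn tn1 : ℝ) :
    ∃ M : ℝ, ∀ s, |ftilde g tn tn1 s| ≤ M := by
  obtain ⟨M, hM⟩ := (isCompact_Icc (a := (0:ℝ)) (b := tn)).exists_bound_of_continuousOn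
    hg.continuousOn
  refine ⟨max M 0, fun s => ?_⟩
  unfold ftilde
  split_ifs with h1 h2
  · exact le_max_of_le_left (by simpa using hM s ⟨h1.1, h1.2⟩)
  · rw [abs_neg]
    exact le_max_of_le_left (by simpa using hM (tn1 - s) ⟨by linarith [h2.2], by linarith [h2.1]⟩)
  · simp

lemma ftilde_intervalIntegrable {g : ℝ → ℝ} (hgm : Measurable g) (hg : Continuous g)
    (tn tn1 a b : ℝ) : IntervalIntegrable (ftilde g tn tn1) volume a b := by
  obtain ⟨M, hM⟩ := ftilde_bound hg tn tn1
  rw [intervalIntegrable_iff]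
  exact Measure.integrableOn_of_bounded measure_Ioc_lt_top.ne
    ((ftilde_measurable hgm tn tn1).aestronglyMeasurable)
    (Filter.Eventually.of_forall fun x => by simpa using hM x)

lemma fseq_continuous (ts : ℕ → ℝ) (c : ℝ) : ∀ n, Continuous (fseq ts c n) := by
  intro n
  induction n with
  | zero => exact continuous_const
  | succ n ih =>
    show Continuous fun t => ∫ s in (0:ℝ)..t, ftilde (fseq ts c n) (ts n) (ts (n + 1)) s
    exact intervalIntegral.continuous_primitive
      (fun a b => ftilde_intervalIntegrable ih.measurable ih (ts n) (ts (n+1)) a b) 0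

lemma ftilde_antisym {g : ℝ → ℝ} {tn tn1 : ℝ} (htn : 0 < tn) (h2 : 2 * tn ≤ tn1)
    {s : ℝ} (hs1 : s ≠ tn) (hs2 : s ≠ tn1 - tn) :
    ftilde g tn tn1 (tn1 - s) = - ftilde g tn tn1 s := by
  have htn1 : tn < tn1 := by linarith
  have z : ∀ x : ℝ, (x < 0 ∨ (tn < x ∧ x < tn1 - tn) ∨ tn1 < x) → ftilde g tn tn1 x = 0 := by
    intro x hx
    unfold ftilde
    rcases hx with h | ⟨ha, hb⟩ | h
    all_goals rw [if_neg (by rintro ⟨u, v⟩; linarith), if_neg (by rintro ⟨u, v⟩; linarith)]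
  by_cases hA : 0 ≤ s ∧ s < tn
  · obtain ⟨h0s, hs⟩ := hA
    have e1 : ftilde g tn tn1 s = g s := by
      unfold ftilde; rw [if_pos ⟨h0s, hs.le⟩]
    have e2 : ftilde g tn tn1 (tn1 - s) = -g s := by
      unfold ftilde
      rw [if_neg (by rintro ⟨u, v⟩; linarith), if_pos (⟨by linarith, by linarith⟩ :
        tn1 - tn ≤ tn1 - s ∧ tn1 - s ≤ tn1), sub_sub_cancel]
    rw [e1, e2]
  · by_cases hB : tn1 - tn < s ∧ s ≤ tn1
    · obtain ⟨hmid, hstn1⟩ := hB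
      have e1 : ftilde g tn tn1 s = -g (tn1 - s) := by
        unfold ftilde
        rw [if_neg (by rintro ⟨u, v⟩; linarith), if_pos ⟨hmid.le, hstn1⟩]
      have e2 : ftilde g tn tn1 (tn1 - s) = g (tn1 - s) := by
        unfold ftilde
        rw [if_pos (⟨by linarith, by linarith⟩ : 0 ≤ tn1 - s ∧ tn1 - s ≤ tn)]
      rw [e1, e2, neg_neg]
    · push_neg at hA hB
      have hdead : s < 0 ∨ (tn < s ∧ s < tn1 - tn) ∨ tn1 < s := by
        rcases lt_or_ge s 0 with h | h
        · exact Or.inl h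
        · have h1 : tn < s := lt_of_le_of_ne (hA h) (Ne.symm hs1)
          rcases lt_or_ge (tn1 - tn) s with h3 | h3
          · exact Or.inr (Or.inr (hB h3))
          · exact Or.inr (Or.inl ⟨h1, lt_of_le_of_ne h3 hs2⟩)
      have hdead2 : tn1 - s < 0 ∨ (tn < tn1 - s ∧ tn1 - s < tn1 - tn) ∨ tn1 < tn1 - s := by
        rcases hdead with h | ⟨ha, hb⟩ | h
        · exact Or.inr (Or.inr (by linarith))
        · exact Or.inr (Or.inl ⟨by linarith, by linarith⟩)
        · exact Or.inl (by linarith)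
      rw [z s hdead, z (tn1 - s) hdead2, neg_zero]

lemma ts_pos (ts : ℕ → ℝ) (ht0 : 0 < ts 0) (hts : ∀ n, 2 * ts n ≤ ts (n + 1)) :
    ∀ n, 0 < ts n := by
  intro n
  induction n with
  | zero => exact ht0
  | succ n ih => linarith [hts n]

lemma fseq_symm (ts : ℕ → ℝ) (c : ℝ) (ht0 : 0 < ts 0) (hts : ∀ n, 2 * ts n ≤ ts (n + 1)) :
    ∀ n, ∀ t : ℝ, fseq ts c n t = fseq ts c n (ts n - t) := by
  intro n t
  cases n with
  | zero => rfl
  | succ n =>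
    set F : ℝ → ℝ := ftilde (fseq ts c n) (ts n) (ts (n + 1)) with hF
    have hcont := fseq_continuous ts c n
    have hint : ∀ a b : ℝ, IntervalIntegrable F volume a b :=
      fun a b => ftilde_intervalIntegrable hcont.measurable hcont (ts n) (ts (n+1)) a b
    have hae : ∀ᵐ u : ℝ, F (ts (n+1) - u) = - F u := by
      have hnull : volume ({ts n, ts (n+1) - ts n} : Set ℝ) = 0 :=
        (Set.toFinite _).measure_zero volume
      refine MeasureTheory.ae_iff.2 (measure_mono_null (fun u hu => ?_) hnull)
      simp only [Set.mem_setOf_eq] at hu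
      by_contra hmem
      simp only [Set.mem_insert_iff, Set.mem_singleton_iff] at hmem
      push_neg at hmem
      exact hu (ftilde_antisym (ts_pos ts ht0 hts n) (hts n) hmem.1 hmem.2)
    -- key: for any a b, ∫ u in a..b, F (ts(n+1) - u) = - ∫ u in a..b, F u
    have key : ∀ a b : ℝ, (∫ u in a..b, F (ts (n+1) - u)) = - ∫ u in a..b, F u := by
      intro a b
      rw [show (- ∫ u in a..b, F u) = ∫ u in a..b, -F u by rw [intervalIntegral.integral_neg]]
      apply intervalIntegral.integral_congr_ae
      filter_upwards [hae] with u hu _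
      exact hu
    have hzero : (∫ u in (0:ℝ)..ts (n+1), F u) = 0 := by
      have h1 : (∫ u in (0:ℝ)..ts (n+1), F (ts (n+1) - u)) = ∫ u in (0:ℝ)..ts (n+1), F u := by
        rw [intervalIntegral.integral_comp_sub_left F (ts (n+1))]
        norm_num
      rw [key] at h1
      linarith
    show (∫ u in (0:ℝ)..t, F u) = ∫ u in (0:ℝ)..(ts (n+1) - t), F u
    have hsplit := intervalIntegral.integral_interval_sub_left (hint 0 (ts (n+1)))
      (hint 0 (ts (n+1) - t))
    have hsub : (∫ u in (ts (n+1) - t)..(ts (n+1)), F u) = - ∫ u in (0:ℝ)..t, F u := by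
      rw [← key 0 t, intervalIntegral.integral_comp_sub_left F (ts (n+1))]
      norm_num
    linarith [hsplit, hsub, hzero]

theorem fseq_complementary_symm (ts : ℕ → ℝ) (c : ℝ) (hc : 0 < c) (ht0 : 0 < ts 0)
    (hts : ∀ n, 2 * ts n ≤ ts (n + 1)) :
    ∀ n : ℕ, ∀ t : ℝ, 0 ≤ t → t ≤ ts n →
      fseq ts c (n + 1) t = fseq ts c (n + 1) (ts n) - fseq ts c (n + 1) (ts n - t) := by
  intro n t ht0' htn
  set F : ℝ → ℝ := ftilde (fseq ts c n) (ts n) (ts (n + 1)) with hF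
  have hcont := fseq_continuous ts c n
  have hint : ∀ a b : ℝ, IntervalIntegrable F volume a b :=
    fun a b => ftilde_intervalIntegrable hcont.measurable hcont (ts n) (ts (n+1)) a b
  show (∫ u in (0:ℝ)..t, F u) =
    (∫ u in (0:ℝ)..ts n, F u) - ∫ u in (0:ℝ)..(ts n - t), F u
  rw [intervalIntegral.integral_interval_sub_left (hint 0 (ts n)) (hint 0 (ts n - t))]
  rw [show (∫ u in (ts n - t)..(ts n), F u) = ∫ u in (0:ℝ)..t, F (ts n - u) by
    rw [intervalIntegral.integral_comp_sub_left F (ts n)]; norm_num]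
  apply intervalIntegral.integral_congr
  intro u hu
  rw [Set.uIcc_of_le ht0'] at hu
  obtain ⟨hu0, hut⟩ := hu
  have h1 : 0 ≤ ts n - u := by linarith
  have h2 : ts n - u ≤ ts n := by linarith
  have hu3 : u ≤ ts n := le_trans hut htn
  show F u = F (ts n - u)
  rw [hF]
  unfold ftilde
  rw [if_pos ⟨hu0, hu3⟩, if_pos ⟨h1, h2⟩]
  exact fseq_symm ts c ht0 hts n u
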